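/- arXiv:1102.5238 — 4 statements merged into one kernel-verified Lean document; each statement's English description precedes it below -/
import Mathlib

section
/- The logarithmic mean θ(s,t) = ∫₀¹ s^(1-p) t^p dp is a concave function on [0,∞) × [0,∞). -/
/-!
For fixed `p ∈ [0, 1]` the map `(s, t) ↦ s ^ (1 - p) * t ^ p` is positively homogeneous and
superadditive on the closed quadrant (Hölder's inequality with exponents `1 / (1 - p)` and
`1 / p`), hence concave; integrating over `p` preserves concavity.
-/

open Set MeasureTheory

namespace Real

theorem sum_rpow_one_sub_mul_rpow_le {ι : Type*} (s : Finset ι) {f g : ι → ℝ}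
    (hf : ∀ i ∈ s, 0 ≤ f i) (hg : ∀ i ∈ s, 0 ≤ g i) {p : ℝ} (hp₀ : 0 ≤ p) (hp₁ : p ≤ 1) :
    ∑ i ∈ s, f i ^ (1 - p) * g i ^ p ≤ (∑ i ∈ s, f i) ^ (1 - p) * (∑ i ∈ s, g i) ^ p := by
  rcases hp₀.eq_or_lt with rfl | hp₀
  · simp
  rcases hp₁.eq_or_lt with rfl | hp₁
  · simp
  have hholder := inner_le_Lp_mul_Lq_of_nonneg s (HolderConjugate.one_sub_inv_inv hp₀ hp₁)
    (fun i hi => rpow_nonneg (hf i hi) (1 - p)) (fun i hi => rpow_nonneg (hg i hi) p)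
  have h1p : 1 - p ≠ 0 := by linarith
  calc ∑ i ∈ s, f i ^ (1 - p) * g i ^ p
      ≤ (∑ i ∈ s, (f i ^ (1 - p)) ^ (1 - p)⁻¹) ^ (1 / (1 - p)⁻¹) *
          (∑ i ∈ s, (g i ^ p) ^ p⁻¹) ^ (1 / p⁻¹) := hholder
    _ = (∑ i ∈ s, f i) ^ (1 - p) * (∑ i ∈ s, g i) ^ p := by
      rw [Finset.sum_congr rfl fun i hi => rpow_rpow_inv (hf i hi) h1p,
        Finset.sum_congr rfl fun i hi => rpow_rpow_inv (hg i hi) hp₀.ne']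
      simp

theorem mul_rpow_one_sub_mul_mul_rpow {a s t p : ℝ} (ha : 0 ≤ a) (hs : 0 ≤ s) (ht : 0 ≤ t) :
    (a * s) ^ (1 - p) * (a * t) ^ p = a * (s ^ (1 - p) * t ^ p) := by
  rw [mul_rpow ha hs, mul_rpow ha ht, mul_mul_mul_comm, ← rpow_add' ha (by simp), sub_add_cancel,
    rpow_one]

theorem concaveOn_rpow_one_sub_mul_rpow {p : ℝ} (hp₀ : 0 ≤ p) (hp₁ : p ≤ 1) :
    ConcaveOn ℝ (Ici 0 ×ˢ Ici 0) fun x : ℝ × ℝ => x.1 ^ (1 - p) * x.2 ^ p := by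
  refine ⟨(convex_Ici 0).prod (convex_Ici 0), ?_⟩
  rintro ⟨s₁, t₁⟩ ⟨hs₁, ht₁⟩ ⟨s₂, t₂⟩ ⟨hs₂, ht₂⟩ a b ha hb -
  simp only [mem_Ici] at hs₁ ht₁ hs₂ ht₂
  simp only [Prod.smul_mk, Prod.mk_add_mk, smul_eq_mul]
  rw [← mul_rpow_one_sub_mul_mul_rpow ha hs₁ ht₁, ← mul_rpow_one_sub_mul_mul_rpow hb hs₂ ht₂]
  have hf : ∀ i, 0 ≤ ![a * s₁, b * s₂] i :=
    Fin.forall_fin_two.2 ⟨mul_nonneg ha hs₁, mul_nonneg hb hs₂⟩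
  have hg : ∀ i, 0 ≤ ![a * t₁, b * t₂] i :=
    Fin.forall_fin_two.2 ⟨mul_nonneg ha ht₁, mul_nonneg hb ht₂⟩
  simpa using sum_rpow_one_sub_mul_rpow_le Finset.univ (fun i _ => hf i) (fun i _ => hg i) hp₀ hp₁

theorem rpow_le_max_one {x q : ℝ} (hx : 0 ≤ x) (hq₀ : 0 ≤ q) (hq₁ : q ≤ 1) : x ^ q ≤ max 1 x :=
  calc x ^ q ≤ max 1 x ^ q := rpow_le_rpow hx (le_max_right 1 x) hq₀
    _ ≤ max 1 x ^ (1 : ℝ) := rpow_le_rpow_of_exponent_le (le_max_left 1 x) hq₁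
    _ = max 1 x := rpow_one _

theorem intervalIntegrable_rpow_one_sub_mul_rpow {s t : ℝ} (hs : 0 ≤ s) (ht : 0 ≤ t) :
    IntervalIntegrable (fun p => s ^ (1 - p) * t ^ p) volume 0 1 := by
  rw [intervalIntegrable_iff_integrableOn_Ioc_of_le zero_le_one]
  refine Measure.integrableOn_of_bounded (M := max 1 s * max 1 t) (by simp)
    (by fun_prop) ((ae_restrict_iff' measurableSet_Ioc).2 (ae_of_all _ fun p hp => ?_))
  rw [norm_of_nonneg (by positivity)]
  exact mul_le_mul (rpow_le_max_one hs (sub_nonneg.2 hp.2) (sub_le_self 1 hp.1.le))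
    (rpow_le_max_one ht hp.1.le hp.2) (by positivity) (by positivity)

end Real

theorem concaveOn_integral {E α : Type*} [AddCommGroup E] [Module ℝ E] [MeasurableSpace α]
    {μ : Measure α} {s : Set E} {f : E → α → ℝ} (hs : Convex ℝ s)
    (hf : ∀ᵐ p ∂μ, ConcaveOn ℝ s fun x => f x p) (hint : ∀ x ∈ s, Integrable (f x) μ) :
    ConcaveOn ℝ s fun x => ∫ p, f x p ∂μ := by
  refine ⟨hs, fun x hx y hy a b ha hb hab => ?_⟩
  simp only [smul_eq_mul]
  rw [← integral_const_mul, ← integral_const_mul, ← integral_add ((hint x hx).const_mul a)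
    ((hint y hy).const_mul b)]
  refine integral_mono_ae (((hint x hx).const_mul a).add ((hint y hy).const_mul b))
    (hint _ (hs hx hy ha hb hab)) ?_
  filter_upwards [hf] with p hp
  exact hp.2 hx hy ha hb hab

theorem concaveOn_intervalIntegral {E : Type*} [AddCommGroup E] [Module ℝ E] {s : Set E}
    {f : E → ℝ → ℝ} {a b : ℝ} (hab : a ≤ b) (hf : ∀ p ∈ Icc a b, ConcaveOn ℝ s fun x => f x p)
    (hint : ∀ x ∈ s, IntervalIntegrable (f x) volume a b) :
    ConcaveOn ℝ s fun x => ∫ p in a..b, f x p := by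
  simp only [intervalIntegral.integral_of_le hab]
  refine concaveOn_integral (hf a ⟨le_rfl, hab⟩).1
    ((ae_restrict_iff' measurableSet_Ioc).2 (ae_of_all _ fun p hp => hf p (Ioc_subset_Icc_self hp)))
    fun x hx => (intervalIntegrable_iff_integrableOn_Ioc_of_le hab).1 (hint x hx)

/-- The logarithmic mean `θ(s,t) = ∫₀¹ s^(1-p) t^p dp` is concave on `[0,∞) × [0,∞)`. -/
theorem log_mean_concave :
    ConcaveOn ℝ (Set.Ici (0:ℝ) ×ˢ Set.Ici (0:ℝ))
      (fun st : ℝ × ℝ => ∫ p in (0:ℝ)..1, st.1 ^ (1 - p) * st.2 ^ p) :=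
  concaveOn_intervalIntegral zero_le_one
    (fun _ hp => Real.concaveOn_rpow_one_sub_mul_rpow hp.1 hp.2)
    fun _ hx => Real.intervalIntegrable_rpow_one_sub_mul_rpow hx.1 hx.2
end

section
/- Let A be a real n×n matrix with a_ii ≥ 0, a_ij = a_ji ≤ 0 for i ≠ j, and ∑_j a_ij = 0 for all i, and let ∼ be the connectivity equivalence relation (i ∼ j iff there is a negative-entry chain from i to j, or i = j). Then Ran A = { x ∈ ℝⁿ : for every equivalence class I_α, ∑_{i ∈ I_α} x_i = 0 }. -/
/-! Since `A` is symmetric, its range is the annihilator of its kernel under the dot product.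
The identity `2 yᵀ A y = ∑ᵢⱼ (-aᵢⱼ) (yᵢ - yⱼ)²` writes the quadratic form as a sum of nonnegative
terms, so `A y = 0` exactly when `y` is constant across every negative entry, that is, on every
connectivity class. A vector annihilates all class-constant vectors iff its class sums vanish. -/

open Matrix BigOperators Classical

theorem Equivalence.forall_dotProduct_eq_zero_iff {R ι : Type*} [CommSemiring R] [Fintype ι]
    {r : ι → ι → Prop} (hr : Equivalence r) (x : ι → R) :
    (∀ u : ι → R, (∀ i j, r i j → u i = u j) → u ⬝ᵥ x = 0) ↔
      ∀ i, ∑ j ∈ Finset.univ.filter (r i), x j = 0 := by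
  constructor
  · intro h i
    have hclass : ∀ j k, r j k → (if r i j then (1 : R) else 0) = if r i k then 1 else 0 :=
      fun j k hjk => by
        simp only [(⟨fun hj => hr.trans hj hjk, fun hk => hr.trans hk (hr.symm hjk)⟩ :
          r i j ↔ r i k)]
    simpa [dotProduct, Finset.sum_filter] using h _ hclass
  · intro h u hu
    let s : Setoid ι := ⟨r, hr⟩
    rw [dotProduct, ← Finset.sum_fiberwise Finset.univ (Quotient.mk s)]
    refine Finset.sum_eq_zero fun q _ => ?_
    induction q using Quotient.ind with | _ i => ?_
    have hfiber : Finset.univ.filter (fun j => Quotient.mk s j = Quotient.mk s i) =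
        Finset.univ.filter (r i) := by
      ext j
      simpa [s, Quotient.eq] using ⟨hr.symm, hr.symm⟩
    rw [hfiber, Finset.sum_congr rfl fun j hj => by rw [← hu i j (Finset.mem_filter.1 hj).2],
      ← Finset.mul_sum, h i, mul_zero]

namespace Matrix

theorem exists_mulVec_eq_iff_forall_dotProduct_eq_zero {K m ι : Type*} [Field K]
    [Fintype m] [Fintype ι] (A : Matrix m ι K) (x : m → K) :
    (∃ y, A *ᵥ y = x) ↔ ∀ u, Aᵀ *ᵥ u = 0 → u ⬝ᵥ x = 0 := by
  constructor
  · rintro ⟨y, rfl⟩ u hu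
    rw [dotProduct_mulVec, ← mulVec_transpose, hu, zero_dotProduct]
  · intro h
    by_contra hx
    have hx' : x ∉ LinearMap.range A.mulVecLin := by simpa using hx
    obtain ⟨f, hfx, hrange⟩ := Submodule.exists_le_ker_of_notMem hx'
    set u := (dotProductEquiv K m).symm f
    have hf : ∀ v, f v = u ⬝ᵥ v := fun v => by
      rw [← dotProductEquiv_apply_apply, LinearEquiv.apply_symm_apply]
    refine hfx ((hf x).trans (h u ?_))
    ext j
    have := hrange (LinearMap.mem_range_self A.mulVecLin (Pi.single j 1))
    rw [LinearMap.mem_ker, hf, mulVecLin_apply, dotProduct_mulVec, dotProduct_single_one] at this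
    rwa [mulVec_transpose]

variable {ι : Type*} [Fintype ι]

theorem mulVec_apply_eq_sum_mul_sub {R : Type*} [CommRing R] {A : Matrix ι ι R}
    (hrow : ∀ i, ∑ j, A i j = 0) (y : ι → R) (i : ι) :
    (A *ᵥ y) i = ∑ j, A i j * (y j - y i) := by
  simp only [mulVec, dotProduct, mul_sub, Finset.sum_sub_distrib, ← Finset.sum_mul, hrow i,
    zero_mul, sub_zero]

theorem two_mul_dotProduct_mulVec_self {R : Type*} [CommRing R] {A : Matrix ι ι R}
    (hsymm : ∀ i j, A i j = A j i) (hrow : ∀ i, ∑ j, A i j = 0) (y : ι → R) :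
    2 * (y ⬝ᵥ A *ᵥ y) = ∑ i, ∑ j, -A i j * (y i - y j) ^ 2 := by
  have hdiag : ∀ i, ∑ j, A i j * y i ^ 2 = 0 := fun i => by rw [← Finset.sum_mul, hrow, zero_mul]
  calc 2 * (y ⬝ᵥ A *ᵥ y)
      = ∑ i, ∑ j, (2 * (y i * (A i j * y j)) - A i j * y i ^ 2 - A j i * y j ^ 2) := by
        simp only [Finset.sum_sub_distrib]
        rw [Finset.sum_comm (s := Finset.univ) (f := fun i j => A j i * y j ^ 2)]
        simp only [hdiag, Finset.sum_const_zero, sub_zero, dotProduct, mulVec, Finset.mul_sum]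
    _ = ∑ i, ∑ j, -A i j * (y i - y j) ^ 2 := by
        refine Finset.sum_congr rfl fun i _ => Finset.sum_congr rfl fun j _ => ?_
        rw [hsymm j i]
        ring

variable {A : Matrix ι ι ℝ}

theorem mulVec_eq_zero_of_forall_lt_zero (hoff : ∀ i j, i ≠ j → A i j ≤ 0)
    (hrow : ∀ i, ∑ j, A i j = 0) {y : ι → ℝ} (hy : ∀ i j, A i j < 0 → y i = y j) :
    A *ᵥ y = 0 := by
  funext i
  rw [mulVec_apply_eq_sum_mul_sub hrow, Pi.zero_apply]
  refine Finset.sum_eq_zero fun j _ => ?_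
  rcases eq_or_ne i j with rfl | hij
  · rw [sub_self, mul_zero]
  rcases (hoff i j hij).lt_or_eq with hneg | hzero
  · rw [hy i j hneg, sub_self, mul_zero]
  · rw [hzero, zero_mul]

theorem eq_of_mulVec_eq_zero (hsymm : ∀ i j, A i j = A j i) (hoff : ∀ i j, i ≠ j → A i j ≤ 0)
    (hrow : ∀ i, ∑ j, A i j = 0) {y : ι → ℝ} (hy : A *ᵥ y = 0) {i j : ι} (hij : A i j < 0) :
    y i = y j := by
  have hterm : ∀ i j, 0 ≤ -A i j * (y i - y j) ^ 2 := fun i j => by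
    rcases eq_or_ne i j with rfl | hne
    · simp
    · exact mul_nonneg (neg_nonneg.2 (hoff i j hne)) (sq_nonneg _)
  have hsum : ∑ i, ∑ j, -A i j * (y i - y j) ^ 2 = 0 := by
    rw [← two_mul_dotProduct_mulVec_self hsymm hrow, hy, dotProduct_zero, mul_zero]
  have hzero := (Finset.sum_eq_zero_iff_of_nonneg fun j _ => hterm i j).1
    ((Finset.sum_eq_zero_iff_of_nonneg fun i _ => Finset.sum_nonneg fun j _ => hterm i j).1
      hsum i (Finset.mem_univ _)) j (Finset.mem_univ _)
  rcases mul_eq_zero.1 hzero with h | h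
  · exact absurd (neg_eq_zero.1 h) hij.ne
  · exact sub_eq_zero.1 (pow_eq_zero_iff two_ne_zero |>.1 h)

theorem mulVec_eq_zero_iff (hsymm : ∀ i j, A i j = A j i) (hoff : ∀ i j, i ≠ j → A i j ≤ 0)
    (hrow : ∀ i, ∑ j, A i j = 0) (y : ι → ℝ) :
    A *ᵥ y = 0 ↔ ∀ i j, Relation.ReflTransGen (fun a b => A a b < 0) i j → y i = y j := by
  refine ⟨fun hy i j hij => ?_, fun hy => mulVec_eq_zero_of_forall_lt_zero hoff hrow
    fun i j hij => hy i j (.single hij)⟩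
  induction hij with
  | refl => rfl
  | tail _ hstep ih => exact ih.trans (eq_of_mulVec_eq_zero hsymm hoff hrow hy hstep)

end Matrix

theorem diag_dominant_range_general (n : ℕ) (A : Matrix (Fin n) (Fin n) ℝ)
    (hsymm : ∀ i j, A i j = A j i)
    (hoff : ∀ i j, i ≠ j → A i j ≤ 0)
    (hrow : ∀ i, ∑ j, A i j = 0) (x : Fin n → ℝ) :
    (∃ y, A.mulVec y = x) ↔
      ∀ i, ∑ j ∈ Finset.univ.filter
          (fun j => Relation.ReflTransGen (fun a b => A a b < 0) i j), x j = 0 := by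
  have hAT : Aᵀ = A := Matrix.ext fun i j => hsymm j i
  have hconn : Equivalence (Relation.ReflTransGen fun a b => A a b < 0) :=
    have : Std.Symm fun a b => A a b < 0 := ⟨fun a b h => by rwa [hsymm]⟩
    ⟨fun _ => .refl, fun h => Std.Symm.symm _ _ h, .trans⟩
  rw [exists_mulVec_eq_iff_forall_dotProduct_eq_zero, hAT,
    ← hconn.forall_dotProduct_eq_zero_iff]
  simp only [mulVec_eq_zero_iff hsymm hoff hrow]

/-- Range characterisation for symmetric diagonally dominant matrices with zero
row sums: `x ∈ Ran A` iff the sum of the entries of `x` over every equivalence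
class of the connectivity relation `∼` (generated by pairs `(i,j)` with
`a_ij < 0`) vanishes; equivalently, for every `i`, the sum of `x j` over the
class of `i` is zero. -/
theorem diag_dominant_range (n : ℕ) (A : Matrix (Fin n) (Fin n) ℝ)
    (hdiag : ∀ i, 0 ≤ A i i)
    (hsymm : ∀ i j, A i j = A j i)
    (hoff : ∀ i j, i ≠ j → A i j ≤ 0)
    (hrow : ∀ i, ∑ j, A i j = 0) (x : Fin n → ℝ) :
    (∃ y, A.mulVec y = x) ↔
      ∀ i, ∑ j ∈ Finset.univ.filter
          (fun j => Relation.ReflTransGen (fun a b => A a b < 0) i j), x j = 0 :=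
  diag_dominant_range_general n A hsymm hoff hrow x
end

section
/- On the two-point space with symmetric kernel p = q, the heat flow starting from any non-equilibrium point has infinite metric derivative with respect to the L²-Wasserstein metric: if β_t = β e^{-2pt} with β ≠ 0, then limsup_{s→t} √(2|β_t - β_s|)/|t-s| = +∞ for every t ≥ 0. -/
open Filter

/-- Convexity lower bound: `|e^x - e^y| ≥ e^{min x y} |x - y|`. -/
lemma exp_abs_sub_lower (x y : ℝ) :
    Real.exp (min x y) * |x - y| ≤ |Real.exp x - Real.exp y| := by
  wlog h : y ≤ x generalizing x y
  · have := this y x (le_of_not_ge h)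
    simpa [min_comm, abs_sub_comm] using this
  rw [min_eq_right h, abs_of_nonneg (sub_nonneg.mpr h),
    abs_of_nonneg (sub_nonneg.mpr (Real.exp_le_exp.mpr h))]
  have h1 : x - y + 1 ≤ Real.exp (x - y) := Real.add_one_le_exp _
  have h2 : Real.exp y * (x - y + 1) ≤ Real.exp y * Real.exp (x - y) :=
    mul_le_mul_of_nonneg_left h1 (Real.exp_pos y).le
  rw [← Real.exp_add] at h2
  ring_nf at h2 ⊢
  nlinarith [Real.exp_pos y]

/-- On the symmetric two-point space (`p = q`), the heat flow `β_t = β e^{-2pt}`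
starting from a non-equilibrium point (`β ≠ 0`) has infinite metric derivative
with respect to the `L²`-Wasserstein metric `W₂(ρ^α, ρ^β) = √(2|β-α|)`:
for every `t ≥ 0`, `limsup_{s → t} √(2|β_t - β_s|)/|t-s| = +∞`. -/
theorem two_point_wasserstein_metric_derivative_infinite (p β : ℝ)
    (hp : 0 < p) (hβ : β ≠ 0) (t : ℝ) (ht : 0 ≤ t) :
    Filter.limsup
      (fun s : ℝ => ENNReal.ofReal
        (Real.sqrt (2 * |β * Real.exp (-2 * p * t) - β * Real.exp (-2 * p * s)|) /
          |t - s|))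
      (nhdsWithin t {t}ᶜ) = ⊤ := by
  set l := nhdsWithin t {t}ᶜ
  set c : ℝ := 2 * p * Real.exp (-2 * p * (t + 1)) with hc
  have hcpos : 0 < c := by positivity
  set A : ℝ := Real.sqrt (2 * |β| * c) with hA
  have hApos : 0 < A := Real.sqrt_pos.mpr (by positivity)
  -- the auxiliary lower-bound function
  set g : ℝ → ℝ := fun s => A / Real.sqrt |t - s| with hg
  -- g tends to atTop
  have hgt : Tendsto g l atTop := by
    have h0 : Tendsto (fun s : ℝ => Real.sqrt |t - s|) l (nhdsWithin 0 (Set.Ioi 0)) := by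
      rw [tendsto_nhdsWithin_iff]
      constructor
      · have : Tendsto (fun s : ℝ => Real.sqrt |t - s|) (nhds t) (nhds (Real.sqrt |t - t|)) :=
          ((continuous_const.sub continuous_id).abs.sqrt).tendsto t
        simpa using this.mono_left nhdsWithin_le_nhds
      · filter_upwards [self_mem_nhdsWithin] with s hs
        have : t - s ≠ 0 := sub_ne_zero.mpr (Ne.symm hs)
        exact Real.sqrt_pos.mpr (abs_pos.mpr this)
    have hinv : Tendsto (fun s : ℝ => (Real.sqrt |t - s|)⁻¹) l atTop :=
      tendsto_inv_nhdsGT_zero.comp h0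
    have := hinv.const_mul_atTop hApos
    simpa [hg, div_eq_mul_inv] using this
  -- eventual inequality
  have hev : ∀ᶠ s in l, ENNReal.ofReal (g s) ≤
      ENNReal.ofReal
        (Real.sqrt (2 * |β * Real.exp (-2 * p * t) - β * Real.exp (-2 * p * s)|) /
          |t - s|) := by
    have hmem : {s : ℝ | |s - t| < 1} ∈ l :=
      nhdsWithin_le_nhds (by
        have : Metric.ball t 1 ∈ nhds t := Metric.ball_mem_nhds t one_pos
        simpa [Metric.ball, Real.dist_eq] using this)
    filter_upwards [hmem, self_mem_nhdsWithin] with s hs1 hs2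
    have hts : t - s ≠ 0 := sub_ne_zero.mpr (Ne.symm hs2)
    have hu : 0 < |t - s| := abs_pos.mpr hts
    apply ENNReal.ofReal_le_ofReal
    -- key real inequality
    have hmin : -2 * p * (t + 1) ≤ min (-2 * p * t) (-2 * p * s) := by
      have hst : s < t + 1 := by
        have := abs_lt.mp hs1
        linarith [this.2]
      have h1 : -2 * p * (t + 1) ≤ -2 * p * t := by nlinarith
      have h2 : -2 * p * (t + 1) ≤ -2 * p * s := by nlinarith
      exact le_min h1 h2
    have hlow : c * |t - s| ≤ |Real.exp (-2 * p * t) - Real.exp (-2 * p * s)| := by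
      refine le_trans ?_ (exp_abs_sub_lower (-2 * p * t) (-2 * p * s))
      have habs : |(-2 * p * t) - (-2 * p * s)| = 2 * p * |t - s| := by
        rw [show (-2 * p * t) - (-2 * p * s) = (2 * p) * (s - t) by ring, abs_mul,
          abs_of_pos (by positivity : (0:ℝ) < 2 * p), abs_sub_comm]
      rw [habs]
      have hexp := Real.exp_le_exp.mpr hmin
      calc c * |t - s| = Real.exp (-2 * p * (t + 1)) * (2 * p * |t - s|) := by
            rw [hc]; ring
        _ ≤ _ := mul_le_mul_of_nonneg_right hexp (by positivity)
    have hnum : 2 * |β| * c * |t - s| ≤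
        2 * |β * Real.exp (-2 * p * t) - β * Real.exp (-2 * p * s)| := by
      have : β * Real.exp (-2 * p * t) - β * Real.exp (-2 * p * s)
          = β * (Real.exp (-2 * p * t) - Real.exp (-2 * p * s)) := by ring
      rw [this, abs_mul]
      nlinarith [abs_pos.mpr hβ]
    -- from hnum conclude via sqrt
    have hsq : A * Real.sqrt |t - s| ≤
        Real.sqrt (2 * |β * Real.exp (-2 * p * t) - β * Real.exp (-2 * p * s)|) := by
      rw [hA, ← Real.sqrt_mul (by positivity)]
      exact Real.sqrt_le_sqrt hnum
    have hsqrtu : 0 < Real.sqrt |t - s| := Real.sqrt_pos.mpr hu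
    rw [hg]
    rw [div_le_div_iff₀ hsqrtu hu]
    calc A * |t - s| = A * Real.sqrt |t - s| * Real.sqrt |t - s| := by
          rw [mul_assoc, Real.mul_self_sqrt hu.le]
      _ ≤ _ := mul_le_mul_of_nonneg_right hsq hsqrtu.le
  -- conclude
  have htop : Tendsto (fun s => ENNReal.ofReal (g s)) l (nhds ⊤) :=
    ENNReal.tendsto_ofReal_atTop.comp hgt
  have h1 : limsup (fun s => ENNReal.ofReal (g s)) l = ⊤ := htop.limsup_eq
  refine top_le_iff.mp ?_
  rw [← h1]
  exact limsup_le_limsup hev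
end

section
/- Let f(t) = t log t on (0,∞) and θ(s,t) = (s-t)/(f'(s)-f'(t)) = (s-t)/(log s - log t) for s ≠ t. On the two-point space with p = q, the function K(β) = p(1 + (1/(1-β²))·(β/arctanh β)) satisfies inf{K(β) : β ∈ (-1,1)} = 2p. -/
/-! Substituting `β = tanh a` turns `(1 - β²)⁻¹ · β / arctanh β` into `sinh (2a) / (2a)`, which is
at least `1` because `|sinh u| ≥ |u|`; the value `2p` itself is attained at `β = 0`. -/

/-- The inverse hyperbolic tangent `arctanh r = ½ log((1+r)/(1-r))`. -/
noncomputable def arctanh (r : ℝ) : ℝ := (1 / 2) * Real.log ((1 + r) / (1 - r))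

open Real Set

lemma arctanh_eq_artanh {x : ℝ} (hx : x ∈ Icc (-1) 1) : arctanh x = artanh x :=
  (artanh_eq_half_log hx).symm

lemma one_le_sinh_div_self {x : ℝ} (hx : x ≠ 0) : 1 ≤ sinh x / x := by
  rcases hx.lt_or_gt with hneg | hpos
  · exact (one_le_div_of_neg hneg).2 (sinh_le_self_iff.2 hneg.le)
  · exact (one_le_div₀ hpos).2 (self_le_sinh_iff.2 hpos.le)

lemma one_div_one_sub_sq_mul_div_artanh {β : ℝ} (hβ : β ∈ Ioo (-1) 1) :
    1 / (1 - β ^ 2) * (β / artanh β) = sinh (2 * artanh β) / (2 * artanh β) := by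
  have hsq : 0 < 1 - β ^ 2 := by nlinarith [hβ.1, hβ.2]
  have hsinh_mul_cosh : sinh (artanh β) * cosh (artanh β) = β / (1 - β ^ 2) := by
    rw [sinh_artanh hβ, cosh_artanh hβ, div_mul_div_comm, mul_one, ← sq, sq_sqrt hsq.le]
  rw [sinh_two_mul, mul_assoc, hsinh_mul_cosh]
  field_simp

lemma one_le_one_div_one_sub_sq_mul_div_arctanh {β : ℝ} (hβ : β ∈ Ioo (-1) 1) :
    1 ≤ 1 / (1 - β ^ 2) * (if β = 0 then 1 else β / arctanh β) := by
  split_ifs with hβ0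
  · simp [hβ0]
  · have hartanh : artanh β ≠ 0 := by
      rw [Ne, artanh_eq_zero_iff]
      grind
    rw [arctanh_eq_artanh (Ioo_subset_Icc_self hβ), one_div_one_sub_sq_mul_div_artanh hβ]
    exact one_le_sinh_div_self (mul_ne_zero two_ne_zero hartanh)

/-- On the symmetric two-point space with `f(t) = t log t` and `θ` the
logarithmic mean, the function
`K(β) = p (1 + (1/(1-β²)) (β / arctanh β))` (with the convention
`β / arctanh β = 1` at `β = 0`) satisfies `inf {K(β) : β ∈ (-1,1)} = 2p`. -/
theorem two_point_convexity_constant (p : ℝ) (hp : 0 < p) :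
    sInf {k : ℝ | ∃ β ∈ Set.Ioo (-1:ℝ) 1,
        k = p * (1 + (1 / (1 - β ^ 2)) *
          (if β = 0 then 1 else β / arctanh β))} = 2 * p := by
  refine IsLeast.csInf_eq ⟨⟨0, by norm_num, by norm_num; ring⟩, ?_⟩
  rintro k ⟨β, hβ, rfl⟩
  have hweight := one_le_one_div_one_sub_sq_mul_div_arctanh hβ
  nlinarith
end
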